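/- arXiv:2501.12126 — 2 statements merged into one kernel-verified Lean document; each statement's English description precedes it below -/
import Mathlib

section
/- Let (V, l_≻, r_≻, l_≺, r_≺) be a representation of an anti-dendriform algebra (A,≻,≺). Then (V*, -(r_≺* + r_≻*), l_≺*, r_≻*, -(l_≺* + l_≻*)) is a representation of (A,≻,≺) on the dual space V*, where f*: A → End(V*) is defined by ⟨f*(x)u*, v⟩ = ⟨u*, f(x)v⟩. -/
/-! Transposition reverses composition, `⟨f*(x) g*(y) u*, v⟩ = ⟨u*, g(y) f(x) v⟩`, so every axiom
for the dual is the transpose of an identity on `V`. With `r_· = r_≻ + r_≺` and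
`l_· = l_≻ + l_≺`, the dual actions are `l_≻' = -r_·*`, `r_≻' = l_≺*`, `l_≺' = r_≻*`,
`r_≺' = -l_·*`, and the transposed identities follow from the axioms of `V` together with
`r_·(y) r_·(x) = r_·(x·y) = r_≻(x ≺ y)`, `l_·(x) l_·(y) = l_·(x·y) = l_≺(x ≻ y)` and
`r_·(x) l_·(y) = l_·(y) r_·(x)`. -/

def IsLin (k : Type*) [Field k] {V W : Type*} [AddCommGroup V] [Module k V]
    [AddCommGroup W] [Module k W] (f : V → W) : Prop :=
  ∀ (c : k) (u v : V), f (c • u + v) = c • f u + f v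

def IsBilin (k : Type*) [Field k] {U V W : Type*} [AddCommGroup U] [Module k U]
    [AddCommGroup V] [Module k V] [AddCommGroup W] [Module k W]
    (f : U → V → W) : Prop :=
  (∀ x, IsLin k (f x)) ∧ (∀ y, IsLin k (fun x => f x y))

/-- An anti-dendriform algebra structure given by two bilinear operations `s` (≻) and `p` (≺). -/
def IsADAlg (k : Type*) [Field k] {A : Type*} [AddCommGroup A] [Module k A]
    (s p : A → A → A) : Prop :=
  IsBilin k s ∧ IsBilin k p ∧
  (∀ x y z, s x (s y z) = - s (s x y + p x y) z) ∧
  (∀ x y z, s x (s y z) = - p x (s y z + p y z)) ∧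
  (∀ x y z, s x (s y z) = p (p x y) z) ∧
  (∀ x y z, p (s x y) z = s x (p y z))

/-- Representation of an anti-dendriform algebra with the action maps bundled as
endomorphisms of `V`; `IsLin k ls` expresses linearity of `ls : A → End V`. -/
def IsADRepL (k : Type*) [Field k] {A V : Type*} [AddCommGroup A] [Module k A]
    [AddCommGroup V] [Module k V]
    (s p : A → A → A) (ls rs lp rp : A → V →ₗ[k] V) : Prop :=
  IsLin k ls ∧ IsLin k rs ∧ IsLin k lp ∧ IsLin k rp ∧
  (∀ x y v, ls x (ls y v) = - ls (s x y + p x y) v) ∧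
  (∀ x y v, ls x (ls y v) = - lp x (ls y v + lp y v)) ∧
  (∀ x y v, ls x (ls y v) = lp (p x y) v) ∧
  (∀ x y v, rs (s x y) v = - rs y (rs x v + rp x v)) ∧
  (∀ x y v, rs (s x y) v = - rp (s x y + p x y) v) ∧
  (∀ x y v, rs (s x y) v = rp y (rp x v)) ∧
  (∀ x y v, ls x (rs y v) = - rs y (ls x v + lp x v)) ∧
  (∀ x y v, ls x (rs y v) = - lp x (rs y v + rp y v)) ∧
  (∀ x y v, ls x (rs y v) = rp y (lp x v)) ∧
  (∀ x y v, lp (s x y) v = ls x (lp y v)) ∧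
  (∀ x y v, rp y (rs x v) = rs (p x y) v) ∧
  (∀ x y v, rp y (ls x v) = ls x (rp y v))

section IsLin

variable {k U W : Type*} [Field k] [AddCommGroup U] [Module k U] [AddCommGroup W] [Module k W]

theorem IsLin.map_add {f : U → W} (hf : IsLin k f) (u v : U) : f (u + v) = f u + f v := by
  simpa only [one_smul] using hf 1 u v

theorem IsLin.neg {f : U → W} (hf : IsLin k f) : IsLin k (fun u => -f u) := by
  intro c u v
  simp only [hf c u v, neg_add, smul_neg]

theorem IsLin.add {f g : U → W} (hf : IsLin k f) (hg : IsLin k g) :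
    IsLin k (fun u => f u + g u) := by
  intro c u v
  simp only [hf c u v, hg c u v, smul_add]
  abel

theorem IsLin.dualMap {V : Type*} [AddCommGroup V] [Module k V] {f : U → V →ₗ[k] W}
    (hf : IsLin k f) : IsLin k (fun u => (f u).dualMap) := by
  intro c u v
  ext φ w
  simp [hf c u v]

end IsLin

namespace IsADRepL

variable {k A V : Type*} [Field k] [AddCommGroup A] [Module k A] [AddCommGroup V] [Module k V]
  {s p : A → A → A} {ls rs lp rp : A → V →ₗ[k] V}

theorem rs_add_rp_mul (h : IsADRepL k s p ls rs lp rp) (x y : A) (w : V) :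
    rs (s x y + p x y) w + rp (s x y + p x y) w = rs (p x y) w := by
  obtain ⟨-, hrs, -, -, -, -, -, -, hRR2, -⟩ := h
  rw [hrs.map_add, LinearMap.add_apply, hRR2]
  abel

theorem rs_add_rp_comp (h : IsADRepL k s p ls rs lp rp) (x y : A) (w : V) :
    rs y (rs x w + rp x w) + rp y (rs x w + rp x w) = rs (p x y) w := by
  obtain ⟨-, -, -, -, -, -, -, hRR1, -, hRR3, -, -, -, -, hRP, -⟩ := h
  rw [map_add (rp y), hRP, ← hRR3]
  linear_combination (norm := module) hRR1 x y w

theorem ls_add_lp_mul (h : IsADRepL k s p ls rs lp rp) (x y : A) (w : V) :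
    ls (s x y + p x y) w + lp (s x y + p x y) w = lp (s x y) w := by
  obtain ⟨-, -, hlp, -, hLL1, -, hLL3, -⟩ := h
  rw [hlp.map_add, LinearMap.add_apply, ← hLL3]
  linear_combination (norm := module) hLL1 x y w

theorem ls_add_lp_comp (h : IsADRepL k s p ls rs lp rp) (x y : A) (w : V) :
    ls x (ls y w + lp y w) + lp x (ls y w + lp y w) = lp (s x y) w := by
  obtain ⟨-, -, -, -, -, hLL2, -, -, -, -, -, -, -, hLpS, -⟩ := h
  rw [map_add (ls x), ← hLpS]
  linear_combination (norm := module) hLL2 x y w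

theorem rs_add_rp_comm_ls_add_lp (h : IsADRepL k s p ls rs lp rp) (x y : A) (w : V) :
    rs x (ls y w + lp y w) + rp x (ls y w + lp y w) =
      ls y (rs x w + rp x w) + lp y (rs x w + rp x w) := by
  obtain ⟨-, -, -, -, -, -, -, -, -, -, hLR1, hLR2, hLR3, -, -, hComm⟩ := h
  rw [map_add (rp x), map_add (ls y), ← hLR3, hComm]
  linear_combination (norm := module) hLR1 y x w - hLR2 y x w

end IsADRepL

theorem stmt3_general {k A V : Type*} [Field k] [AddCommGroup A] [Module k A]
    [AddCommGroup V] [Module k V]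
    (s p : A → A → A) (ls rs lp rp : A → V →ₗ[k] V)
    (h : IsADRepL k s p ls rs lp rp) :
    IsADRepL k s p
      (fun x => -((rp x).dualMap + (rs x).dualMap))
      (fun x => (lp x).dualMap)
      (fun x => (rs x).dualMap)
      (fun x => -((lp x).dualMap + (ls x).dualMap)) := by
  have ⟨hls, hrs, hlp, hrp, _, hLL2, hLL3, hRR1, _, _, hLR1, hLR2, hLR3, hLpS, hRP, _⟩ := h
  refine ⟨(hrp.dualMap.add hrs.dualMap).neg, hlp.dualMap, hrs.dualMap,
    (hlp.dualMap.add hls.dualMap).neg, ?_, ?_, ?_, ?_, ?_, ?_, ?_, ?_, ?_, ?_, ?_, ?_⟩ <;>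
    intro x y v <;> ext w <;>
    simp only [LinearMap.dualMap_apply, LinearMap.neg_apply, LinearMap.add_apply, map_add, map_neg]
  · linear_combination (norm := (simp only [map_add]; ring1))
      congrArg v (h.rs_add_rp_comp x y w) - congrArg v (h.rs_add_rp_mul x y w)
  · linear_combination (norm := (simp only [map_add]; ring1))
      congrArg v (h.rs_add_rp_comp x y w) - congrArg v (hRP x y w)
  · linear_combination (norm := (simp only [map_add]; ring1))
      congrArg v (h.rs_add_rp_comp x y w)
  · linear_combination congrArg v (hLpS x y w)
  · linear_combination (norm := (simp only [map_add]; ring1))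
      -congrArg v (h.ls_add_lp_mul x y w)
  · linear_combination (norm := (simp only [map_add]; ring1))
      -congrArg v (h.ls_add_lp_comp x y w)
  · linear_combination (norm := (simp only [map_add, map_neg]; ring1))
      -congrArg v (hLR2 y x w) + congrArg v (hLR3 y x w)
  · linear_combination (norm := (simp only [map_add, map_neg]; ring1))
      -congrArg v (hLR2 y x w)
  · linear_combination (norm := (simp only [map_add, map_neg]; ring1))
      congrArg v (hLR1 y x w) - congrArg v (hLR2 y x w)
  · linear_combination (norm := (simp only [map_add, map_neg]; ring1))
      congrArg v (hRR1 x y w)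
  · linear_combination (norm := (simp only [map_add, map_neg]; ring1))
      -congrArg v (hLL2 x y w) + congrArg v (hLL3 x y w)
  · linear_combination (norm := (simp only [map_add]; ring1))
      congrArg v (h.rs_add_rp_comm_ls_add_lp x y w)

theorem stmt3 {k A V : Type*} [Field k] [AddCommGroup A] [Module k A]
    [AddCommGroup V] [Module k V] [FiniteDimensional k V]
    (s p : A → A → A) (ls rs lp rp : A → V →ₗ[k] V)
    (hA : IsADAlg k s p) (h : IsADRepL k s p ls rs lp rp) :
    IsADRepL k s p
      (fun x => -((rp x).dualMap + (rs x).dualMap))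
      (fun x => (lp x).dualMap)
      (fun x => (rs x).dualMap)
      (fun x => -((lp x).dualMap + (ls x).dualMap)) :=
  stmt3_general s p ls rs lp rp h
end

section
/- Let 0 → B →^i E →^p A → 0 be a non-abelian extension of anti-dendriform algebras with section s and induced 2-cocycle (l_≻, r_≻, l_≺, r_≺, ω₁, ω₂). Let K: Aut_B(E) → Aut(A) × Aut(B) be K(γ) = (pγs, γ|_B). Then the map S: Ker K → Z¹_nab(A,B) defined by S(γ)(x) = γs(x) - s(x) is a group isomorphism, where Z¹_nab(A,B) is the group of non-abelian 1-cocycles. -/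
/-!
Inverting `S`: a non-abelian 1-cocycle `φ` gives the transvection `e ↦ e + i(φ(p e))` of `E`.
An element `γ` of `Ker K` fixes `B` and moves `s(x)` by `i(S γ x)`, so since `E = s(A) ⊕ i(B)` it
is the transvection of `S γ`; this gives injectivity, and since transvections compose by adding
their maps, `S` is additive. Expanding `γ_φ(u ⋆ v) = γ_φ(u) ⋆ γ_φ(v)` with `u, v` running over
`s(A)` and `i(B)` shows that a transvection is multiplicative for `⋆ ∈ {≻, ≺}` exactly when `φ`
satisfies the cocycle identity for `⋆` and `φ(A)` annihilates `B` under `⋆`, which gives both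
`S(Ker K) ⊆ Z¹_nab(A, B)` and surjectivity.
-/

open Function

namespace IsLin

variable {k U V W : Type*} [Field k] [AddCommGroup U] [Module k U] [AddCommGroup V] [Module k V]
  [AddCommGroup W] [Module k W] {f : V → W}

theorem map_add_s15 (hf : IsLin k f) (u v : V) : f (u + v) = f u + f v := by
  simpa using hf 1 u v

theorem map_zero (hf : IsLin k f) : f 0 = 0 := by
  simpa using hf.map_add_s15 0 0

theorem map_sub (hf : IsLin k f) (u v : V) : f (u - v) = f u - f v := by
  simpa [sub_eq_neg_add] using hf (-1) v u

theorem id : IsLin k (id : V → V) := fun _ _ _ => rfl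

theorem comp {g : U → V} (hf : IsLin k f) (hg : IsLin k g) : IsLin k (f ∘ g) := fun c u v => by
  simp only [Function.comp_apply, hg c u v, hf c (g u) (g v)]

theorem add_s15 {g : V → W} (hf : IsLin k f) (hg : IsLin k g) : IsLin k (fun v => f v + g v) :=
  fun c u v => by simp only [hf c, hg c, smul_add]; abel

theorem sub {g : V → W} (hf : IsLin k f) (hg : IsLin k g) : IsLin k (fun v => f v - g v) :=
  fun c u v => by simp only [hf c, hg c, smul_sub]; abel

theorem of_comp_injective {g : U → V} (hf : IsLin k f) (hinj : Injective f)
    (hfg : IsLin k (f ∘ g)) : IsLin k g :=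
  fun c u v => hinj <| (hfg c u v).trans (hf c _ _).symm

end IsLin

namespace IsBilin

variable {k U V W : Type*} [Field k] [AddCommGroup U] [Module k U] [AddCommGroup V] [Module k V]
  [AddCommGroup W] [Module k W] {m : U → V → W}

theorem map_add_left (hm : IsBilin k m) (u u' : U) (v : V) : m (u + u') v = m u v + m u' v :=
  (hm.2 v).map_add_s15 u u'

theorem map_add_right (hm : IsBilin k m) (u : U) (v v' : V) : m u (v + v') = m u v + m u v' :=
  (hm.1 u).map_add_s15 v v'

theorem map_zero_left (hm : IsBilin k m) (v : V) : m 0 v = 0 :=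
  (hm.2 v).map_zero

theorem map_zero_right (hm : IsBilin k m) (u : U) : m u 0 = 0 :=
  (hm.1 u).map_zero

end IsBilin

section Extension

variable {k A B E : Type*} [Field k] {i : B → E} {pr : E → A} {st : A → E}

theorem exists_eq_sub_of_pr_eq [AddCommGroup A] [Module k A] [AddCommGroup E] [Module k E]
    (hpr : IsLin k pr) (hexact : ∀ e, pr e = 0 ↔ ∃ b, i b = e) {e e' : E} (h : pr e = pr e') :
    ∃ b, i b = e - e' :=
  (hexact _).mp (by rw [hpr.map_sub, h, sub_self])

theorem exists_eq_section_add [AddCommGroup A] [Module k A] [AddCommGroup E] [Module k E]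
    (hpr : IsLin k pr) (hexact : ∀ e, pr e = 0 ↔ ∃ b, i b = e) (hsec : ∀ x, pr (st x) = x)
    (e : E) : ∃ b, e = st (pr e) + i b := by
  obtain ⟨b, hb⟩ := exists_eq_sub_of_pr_eq hpr hexact (hsec (pr e)).symm
  exact ⟨b, by rw [hb, add_sub_cancel]⟩

/-- For `φ ∈ Z¹_nab(A, B)` this is the element of `Ker K` that `S` sends to `φ`. -/
def transvection [Add E] (i : B → E) (pr : E → A) (φ : A → B) (e : E) : E :=
  e + i (φ (pr e))

theorem transvection_section_sub [AddCommGroup E] (hsec : ∀ x, pr (st x) = x) (φ : A → B)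
    (x : A) : transvection i pr φ (st x) - st x = i (φ x) := by
  rw [transvection, hsec, add_sub_cancel_left]

theorem pr_transvection [AddCommGroup A] [Module k A] [AddCommGroup E] [Module k E]
    (hpr : IsLin k pr) (hpri : ∀ b, pr (i b) = 0) (φ : A → B) (e : E) :
    pr (transvection i pr φ e) = pr e := by
  rw [transvection, hpr.map_add_s15, hpri, add_zero]

theorem transvection_inclusion [AddCommGroup A] [AddCommGroup B] [Module k B] [AddCommGroup E]
    [Module k E] (hi : IsLin k i) (hpri : ∀ b, pr (i b) = 0) {φ : A → B} (hφ : φ 0 = 0) (b : B) :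
    transvection i pr φ (i b) = i b := by
  rw [transvection, hpri, hφ, hi.map_zero, add_zero]

theorem transvection_zero [AddCommGroup B] [Module k B] [AddCommGroup E] [Module k E]
    (hi : IsLin k i) : transvection i pr 0 = id := by
  funext e
  rw [transvection, Pi.zero_apply, hi.map_zero, add_zero, id]

section Module

variable [AddCommGroup A] [Module k A] [AddCommGroup B] [Module k B] [AddCommGroup E] [Module k E]

theorem transvection_comp (hi : IsLin k i) (hpr : IsLin k pr) (hpri : ∀ b, pr (i b) = 0)
    (φ ψ : A → B) : transvection i pr φ ∘ transvection i pr ψ = transvection i pr (φ + ψ) := by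
  funext e
  rw [Function.comp_apply, transvection, pr_transvection hpr hpri, transvection, transvection,
    Pi.add_apply, hi.map_add_s15]
  abel

theorem transvection_bijective (hi : IsLin k i) (hpr : IsLin k pr) (hpri : ∀ b, pr (i b) = 0)
    (φ : A → B) : Bijective (transvection i pr φ) := by
  have hleft := transvection_comp hi hpr hpri (-φ) φ
  have hright := transvection_comp hi hpr hpri φ (-φ)
  rw [neg_add_cancel, transvection_zero hi] at hleft
  rw [add_neg_cancel, transvection_zero hi] at hright
  exact bijective_iff_has_inverse.mpr ⟨transvection i pr (-φ), congrFun hleft, congrFun hright⟩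

theorem transvection_isLin (hi : IsLin k i) (hpr : IsLin k pr) {φ : A → B} (hφ : IsLin k φ) :
    IsLin k (transvection i pr φ) :=
  IsLin.id.add_s15 (hi.comp (hφ.comp hpr))

theorem isLin_of_isLin_transvection (hi : IsLin k i) (hiinj : Injective i) (hst : IsLin k st)
    (hsec : ∀ x, pr (st x) = x) {φ : A → B} (h : IsLin k (transvection i pr φ)) : IsLin k φ := by
  refine hi.of_comp_injective hiinj ?_
  have hiφ : i ∘ φ = fun x => transvection i pr φ (st x) - st x :=
    funext fun x => (transvection_section_sub hsec φ x).symm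
  rw [hiφ]
  exact (h.comp hst).sub hst

end Module

theorem eq_transvection [AddCommGroup A] [Module k A] [AddCommGroup E] [Module k E]
    (hpr : IsLin k pr) (hexact : ∀ e, pr e = 0 ↔ ∃ b, i b = e) (hsec : ∀ x, pr (st x) = x)
    {γ : E → E} {φ : A → B} (hγ : IsLin k γ) (hγi : ∀ b, γ (i b) = i b)
    (hφ : ∀ x, i (φ x) = γ (st x) - st x) : γ = transvection i pr φ := by
  funext e
  obtain ⟨b, hb⟩ := exists_eq_section_add hpr hexact hsec e
  calc γ e = γ (st (pr e) + i b) := congrArg γ hb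
    _ = γ (st (pr e)) + i b := by rw [hγ.map_add_s15, hγi]
    _ = st (pr e) + i b + i (φ (pr e)) := by rw [hφ]; abel
    _ = transvection i pr φ e := by rw [transvection, ← hb]

end Extension

section Cocycle

variable {k A B E : Type*} [Field k] {i : B → E} {pr : E → A} {st : A → E}
  {mA : A → A → A} {mB : B → B → B} {mE : E → E → E} {l r : A → B → B} {φ : A → B}

/-- `Z¹_nab(A, B)` consists of the linear maps satisfying this for both `(≻, l_≻, r_≻)` and
`(≺, l_≺, r_≺)`. -/
def IsNabCocycle [AddCommGroup B] (mA : A → A → A) (mB : B → B → B) (l r : A → B → B)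
    (φ : A → B) : Prop :=
  (∀ x y, φ (mA x y) - mB (φ x) (φ y) = l x (φ y) + r y (φ x)) ∧
  (∀ x a, mB (φ x) a = 0) ∧ (∀ x a, mB a (φ x) = 0)

theorem transvection_map_mul_iff_expand [AddCommGroup E] [Module k E] (hmE : IsBilin k mE) :
    (∀ u v, transvection i pr φ (mE u v) =
      mE (transvection i pr φ u) (transvection i pr φ v)) ↔
    ∀ u v, i (φ (pr (mE u v))) =
      mE u (i (φ (pr v))) + mE (i (φ (pr u))) v + mE (i (φ (pr u))) (i (φ (pr v))) := by
  refine forall₂_congr fun u v => ?_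
  rw [transvection, transvection, transvection, hmE.map_add_left, hmE.map_add_right,
    hmE.map_add_right, add_assoc, add_assoc, add_right_inj, ← add_assoc]

theorem isNabCocycle_of_expand [AddCommGroup A] [AddCommGroup B] [Module k B] [AddCommGroup E]
    [Module k E] (hi : IsLin k i) (hiinj : Injective i) (hpri : ∀ b, pr (i b) = 0)
    (hsec : ∀ x, pr (st x) = x) (hmE : IsBilin k mE)
    (him : ∀ a b, i (mB a b) = mE (i a) (i b)) (hprm : ∀ u v, pr (mE u v) = mA (pr u) (pr v))
    (hl : ∀ x a, i (l x a) = mE (st x) (i a)) (hr : ∀ x a, i (r x a) = mE (i a) (st x))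
    (hφ : φ 0 = 0)
    (h : ∀ u v, i (φ (pr (mE u v))) =
      mE u (i (φ (pr v))) + mE (i (φ (pr u))) v + mE (i (φ (pr u))) (i (φ (pr v)))) :
    IsNabCocycle mA mB l r φ := by
  have hleft : ∀ x a, mB (φ x) a = 0 := fun x a => hiinj <| by
    have h' := h (st x) (i a)
    rw [← hl, hpri, hpri, hsec, hφ, hi.map_zero, hmE.map_zero_right, hmE.map_zero_right,
      zero_add, add_zero, ← him] at h'
    exact h'.symm.trans hi.map_zero.symm
  have hright : ∀ x a, mB a (φ x) = 0 := fun x a => hiinj <| by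
    have h' := h (i a) (st x)
    rw [← hr, hpri, hpri, hsec, hφ, hi.map_zero, hmE.map_zero_left, hmE.map_zero_left,
      add_zero, add_zero, ← him] at h'
    exact h'.symm.trans hi.map_zero.symm
  refine ⟨fun x y => hiinj ?_, hleft, hright⟩
  have h' := h (st x) (st y)
  rw [hprm, hsec, hsec, ← hl, ← hr, ← him] at h'
  rw [hi.map_sub, h', hleft, hi.map_add_s15, hi.map_zero]
  abel

section Module

variable [AddCommGroup A] [Module k A] [AddCommGroup B] [Module k B] [AddCommGroup E] [Module k E]

theorem expand_of_isNabCocycle (hi : IsLin k i) (hpr : IsLin k pr)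
    (hexact : ∀ e, pr e = 0 ↔ ∃ b, i b = e) (hsec : ∀ x, pr (st x) = x) (hmE : IsBilin k mE)
    (him : ∀ a b, i (mB a b) = mE (i a) (i b)) (hprm : ∀ u v, pr (mE u v) = mA (pr u) (pr v))
    (hl : ∀ x a, i (l x a) = mE (st x) (i a)) (hr : ∀ x a, i (r x a) = mE (i a) (st x))
    (hφ : IsNabCocycle mA mB l r φ) (u v : E) :
    i (φ (pr (mE u v))) =
      mE u (i (φ (pr v))) + mE (i (φ (pr u))) v + mE (i (φ (pr u))) (i (φ (pr v))) := by
  obtain ⟨hcoc, hleft, hright⟩ := hφ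
  have hu : ∀ x, mE u (i (φ x)) = i (l (pr u) (φ x)) := fun x => by
    obtain ⟨a, ha⟩ := exists_eq_section_add hpr hexact hsec u
    rw [ha, hmE.map_add_left, ← hl, ← him, hright, hi.map_zero, add_zero, ← ha]
  have hv : ∀ x, mE (i (φ x)) v = i (r (pr v) (φ x)) := fun x => by
    obtain ⟨b, hb⟩ := exists_eq_section_add hpr hexact hsec v
    rw [hb, hmE.map_add_right, ← hr, ← him, hleft, hi.map_zero, add_zero, ← hb]
  have hcoc' := hcoc (pr u) (pr v)
  rw [hleft, sub_zero] at hcoc'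
  rw [hu, hv, ← him, hleft, hi.map_zero, add_zero, hprm, hcoc', hi.map_add_s15]

theorem transvection_map_mul_iff (hi : IsLin k i) (hiinj : Injective i) (hpr : IsLin k pr)
    (hexact : ∀ e, pr e = 0 ↔ ∃ b, i b = e) (hsec : ∀ x, pr (st x) = x) (hmE : IsBilin k mE)
    (him : ∀ a b, i (mB a b) = mE (i a) (i b)) (hprm : ∀ u v, pr (mE u v) = mA (pr u) (pr v))
    (hl : ∀ x a, i (l x a) = mE (st x) (i a)) (hr : ∀ x a, i (r x a) = mE (i a) (st x))
    (hφ : φ 0 = 0) :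
    (∀ u v, transvection i pr φ (mE u v) =
      mE (transvection i pr φ u) (transvection i pr φ v)) ↔ IsNabCocycle mA mB l r φ := by
  have hpri : ∀ b, pr (i b) = 0 := fun b => (hexact (i b)).mpr ⟨b, rfl⟩
  rw [transvection_map_mul_iff_expand hmE]
  exact ⟨isNabCocycle_of_expand hi hiinj hpri hsec hmE him hprm hl hr hφ,
    expand_of_isNabCocycle hi hpr hexact hsec hmE him hprm hl hr⟩

end Module

end Cocycle

theorem stmt15_general {k A B E : Type*} [Field k] [AddCommGroup A] [Module k A]
    [AddCommGroup B] [Module k B] [AddCommGroup E] [Module k E]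
    (sA pA : A → A → A) (sB pB : B → B → B) (sE pE : E → E → E)
    (hE : IsADAlg k sE pE)
    (i : B → E) (hi : IsLin k i) (hiinj : Function.Injective i)
    (his : ∀ a b, i (sB a b) = sE (i a) (i b))
    (hip : ∀ a b, i (pB a b) = pE (i a) (i b))
    (pr : E → A) (hpr : IsLin k pr)
    (hprs : ∀ u v, pr (sE u v) = sA (pr u) (pr v))
    (hprp : ∀ u v, pr (pE u v) = pA (pr u) (pr v))
    (hexact : ∀ e, pr e = 0 ↔ ∃ b, i b = e)
    (st : A → E) (hst : IsLin k st) (hsec : ∀ x, pr (st x) = x)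
    (ls rs lp rp : A → B → B)
    (hls : ∀ x a, i (ls x a) = sE (st x) (i a))
    (hrs : ∀ x a, i (rs x a) = sE (i a) (st x))
    (hlp : ∀ x a, i (lp x a) = pE (st x) (i a))
    (hrp : ∀ x a, i (rp x a) = pE (i a) (st x)) :
    let KerK : (E → E) → Prop := fun γ =>
      IsLin k γ ∧ Function.Bijective γ ∧
      (∀ u v, γ (sE u v) = sE (γ u) (γ v)) ∧
      (∀ u v, γ (pE u v) = pE (γ u) (γ v)) ∧
      (∀ a : B, γ (i a) = i a) ∧ (∀ x : A, pr (γ (st x)) = x)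
    let Z1 : (A → B) → Prop := fun φ =>
      IsLin k φ ∧
      (∀ x y, φ (sA x y) - sB (φ x) (φ y) = ls x (φ y) + rs y (φ x)) ∧
      (∀ x y, φ (pA x y) - pB (φ x) (φ y) = lp x (φ y) + rp y (φ x)) ∧
      (∀ x a, sB (φ x) a = 0) ∧ (∀ x a, sB a (φ x) = 0) ∧
      (∀ x a, pB (φ x) a = 0) ∧ (∀ x a, pB a (φ x) = 0)
    -- S(γ)(x) is the unique element of B with i (S γ x) = γ (st x) - st x;
    -- it is well defined, lands in Z¹, S is a group homomorphism, injective and surjective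
    (∀ γ, KerK γ → ∀ x, ∃ b : B, i b = γ (st x) - st x) ∧
    (∀ γ φ, KerK γ → (∀ x, i (φ x) = γ (st x) - st x) → Z1 φ) ∧
    (∀ (γ1 γ2 : E → E) (φ1 φ2 φ3 : A → B), KerK γ1 → KerK γ2 →
        (∀ x, i (φ1 x) = γ1 (st x) - st x) →
        (∀ x, i (φ2 x) = γ2 (st x) - st x) →
        (∀ x, i (φ3 x) = γ1 (γ2 (st x)) - st x) →
        ∀ x, φ3 x = φ1 x + φ2 x) ∧
    (∀ (γ1 γ2 : E → E) (φ : A → B), KerK γ1 → KerK γ2 →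
        (∀ x, i (φ x) = γ1 (st x) - st x) →
        (∀ x, i (φ x) = γ2 (st x) - st x) → γ1 = γ2) ∧
    (∀ φ, Z1 φ → ∃ γ, KerK γ ∧ ∀ x, i (φ x) = γ (st x) - st x) := by
  intro KerK Z1
  have hpri : ∀ b, pr (i b) = 0 := fun b => (hexact (i b)).mpr ⟨b, rfl⟩
  have hker : ∀ γ φ, KerK γ → (∀ x, i (φ x) = γ (st x) - st x) → γ = transvection i pr φ :=
    fun γ φ hγ hφ => eq_transvection hpr hexact hsec hγ.1 hγ.2.2.2.2.1 hφ
  have hsE (φ : A → B) (hφ : φ 0 = 0) :=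
    transvection_map_mul_iff hi hiinj hpr hexact hsec hE.1 his hprs hls hrs hφ
  have hpE (φ : A → B) (hφ : φ 0 = 0) :=
    transvection_map_mul_iff hi hiinj hpr hexact hsec hE.2.1 hip hprp hlp hrp hφ
  refine ⟨fun γ hγ x => exists_eq_sub_of_pr_eq hpr hexact (by rw [hγ.2.2.2.2.2, hsec]),
    fun γ φ hγ hφ => ?_, fun γ1 γ2 φ1 φ2 φ3 h1 h2 hφ1 hφ2 hφ3 x => hiinj ?_,
    fun γ1 γ2 φ h1 h2 hφ1 hφ2 => (hker γ1 φ h1 hφ1).trans (hker γ2 φ h2 hφ2).symm,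
    fun φ hφ => ⟨transvection i pr φ, ?_, fun x => (transvection_section_sub hsec φ x).symm⟩⟩
  · obtain rfl := hker γ φ hγ hφ
    obtain ⟨hlin, -, hs, hp, -, -⟩ := hγ
    have hφlin := isLin_of_isLin_transvection hi hiinj hst hsec hlin
    obtain ⟨hcs, hsL, hsR⟩ := (hsE φ hφlin.map_zero).mp hs
    obtain ⟨hcp, hpL, hpR⟩ := (hpE φ hφlin.map_zero).mp hp
    exact ⟨hφlin, hcs, hcp, hsL, hsR, hpL, hpR⟩
  · rw [hφ3, hker γ1 φ1 h1 hφ1, hker γ2 φ2 h2 hφ2,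
      ← Function.comp_apply (f := transvection i pr φ1), transvection_comp hi hpr hpri,
      transvection_section_sub hsec, Pi.add_apply]
  · obtain ⟨hφlin, hcs, hcp, hsL, hsR, hpL, hpR⟩ := hφ
    exact ⟨transvection_isLin hi hpr hφlin, transvection_bijective hi hpr hpri φ,
      (hsE φ hφlin.map_zero).mpr ⟨hcs, hsL, hsR⟩, (hpE φ hφlin.map_zero).mpr ⟨hcp, hpL, hpR⟩,
      transvection_inclusion hi hpri hφlin.map_zero,
      fun x => by rw [pr_transvection hpr hpri, hsec]⟩

theorem stmt15 {k A B E : Type*} [Field k] [AddCommGroup A] [Module k A]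
    [AddCommGroup B] [Module k B] [AddCommGroup E] [Module k E]
    (sA pA : A → A → A) (sB pB : B → B → B) (sE pE : E → E → E)
    (hA : IsADAlg k sA pA) (hB : IsADAlg k sB pB) (hE : IsADAlg k sE pE)
    (i : B → E) (hi : IsLin k i) (hiinj : Function.Injective i)
    (his : ∀ a b, i (sB a b) = sE (i a) (i b))
    (hip : ∀ a b, i (pB a b) = pE (i a) (i b))
    (pr : E → A) (hpr : IsLin k pr) (hprsur : Function.Surjective pr)
    (hprs : ∀ u v, pr (sE u v) = sA (pr u) (pr v))
    (hprp : ∀ u v, pr (pE u v) = pA (pr u) (pr v))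
    (hexact : ∀ e, pr e = 0 ↔ ∃ b, i b = e)
    (st : A → E) (hst : IsLin k st) (hsec : ∀ x, pr (st x) = x)
    (ls rs lp rp : A → B → B)
    (hls : ∀ x a, i (ls x a) = sE (st x) (i a))
    (hrs : ∀ x a, i (rs x a) = sE (i a) (st x))
    (hlp : ∀ x a, i (lp x a) = pE (st x) (i a))
    (hrp : ∀ x a, i (rp x a) = pE (i a) (st x)) :
    let KerK : (E → E) → Prop := fun γ =>
      IsLin k γ ∧ Function.Bijective γ ∧
      (∀ u v, γ (sE u v) = sE (γ u) (γ v)) ∧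
      (∀ u v, γ (pE u v) = pE (γ u) (γ v)) ∧
      (∀ a : B, γ (i a) = i a) ∧ (∀ x : A, pr (γ (st x)) = x)
    let Z1 : (A → B) → Prop := fun φ =>
      IsLin k φ ∧
      (∀ x y, φ (sA x y) - sB (φ x) (φ y) = ls x (φ y) + rs y (φ x)) ∧
      (∀ x y, φ (pA x y) - pB (φ x) (φ y) = lp x (φ y) + rp y (φ x)) ∧
      (∀ x a, sB (φ x) a = 0) ∧ (∀ x a, sB a (φ x) = 0) ∧
      (∀ x a, pB (φ x) a = 0) ∧ (∀ x a, pB a (φ x) = 0)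
    -- S(γ)(x) is the unique element of B with i (S γ x) = γ (st x) - st x;
    -- it is well defined, lands in Z¹, S is a group homomorphism, injective and surjective
    (∀ γ, KerK γ → ∀ x, ∃ b : B, i b = γ (st x) - st x) ∧
    (∀ γ φ, KerK γ → (∀ x, i (φ x) = γ (st x) - st x) → Z1 φ) ∧
    (∀ (γ1 γ2 : E → E) (φ1 φ2 φ3 : A → B), KerK γ1 → KerK γ2 →
        (∀ x, i (φ1 x) = γ1 (st x) - st x) →
        (∀ x, i (φ2 x) = γ2 (st x) - st x) →
        (∀ x, i (φ3 x) = γ1 (γ2 (st x)) - st x) →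
        ∀ x, φ3 x = φ1 x + φ2 x) ∧
    (∀ (γ1 γ2 : E → E) (φ : A → B), KerK γ1 → KerK γ2 →
        (∀ x, i (φ x) = γ1 (st x) - st x) →
        (∀ x, i (φ x) = γ2 (st x) - st x) → γ1 = γ2) ∧
    (∀ φ, Z1 φ → ∃ γ, KerK γ ∧ ∀ x, i (φ x) = γ (st x) - st x) :=
  stmt15_general sA pA sB pB sE pE hE i hi hiinj his hip pr hpr hprs hprp hexact st hst hsec ls rs
    lp rp hls hrs hlp hrp
end
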